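/- arXiv:2303.11385 — 6 statements merged into one kernel-verified Lean document; each statement's English description precedes it below -/
import Mathlib

section
/- Let y : ℝ → ℝ be differentiable on [0, ∞) with y(0) ≥ 0. Suppose that for every t ≥ 0, if y(t) ≤ 0 then y'(t) ≥ 0. Then y(t) ≥ 0 for all t ≥ 0. -/
/-- Scalar forward-invariance principle: a function `y` differentiable on `[0, ∞)`
with `y 0 ≥ 0` whose derivative is nonnegative whenever `y` is nonpositive
stays nonnegative for all `t ≥ 0`. -/
theorem scalar_forward_invariance
    (y y' : ℝ → ℝ)
    (hdiff : ∀ t ∈ Set.Ici (0 : ℝ), HasDerivWithinAt y (y' t) (Set.Ici 0) t)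
    (h0 : 0 ≤ y 0)
    (hinv : ∀ t, 0 ≤ t → y t ≤ 0 → 0 ≤ y' t) :
    ∀ t, 0 ≤ t → 0 ≤ y t := by
  have hcont : ContinuousOn y (Set.Ici 0) := fun x hx =>
    (hdiff x hx).continuousWithinAt
  intro t ht
  by_contra hneg
  push_neg at hneg
  set S : Set ℝ := Set.Icc 0 t ∩ y ⁻¹' Set.Ici 0 with hS
  have hSclosed : IsClosed S := by
    have : ContinuousOn y (Set.Icc 0 t) :=
      hcont.mono (fun x hx => hx.1)
    exact this.preimage_isClosed_of_isClosed isClosed_Icc isClosed_Ici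
  have hSne : S.Nonempty := ⟨0, ⟨le_refl 0, ht⟩, h0⟩
  have hSbdd : BddAbove S := ⟨t, fun x hx => hx.1.2⟩
  set s := sSup S with hs
  have hsS : s ∈ S := hSclosed.csSup_mem hSne hSbdd
  have hs0 : 0 ≤ s := hsS.1.1
  have hys : 0 ≤ y s := hsS.2
  have hst : s < t := by
    rcases lt_or_eq_of_le hsS.1.2 with h | h
    · exact h
    · exact absurd (h ▸ hys) (not_le.mpr hneg)
  -- on (s, t), y < 0
  have hylt : ∀ u ∈ Set.Ioo s t, y u < 0 := by
    intro u hu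
    by_contra h
    push_neg at h
    have : u ∈ S := ⟨⟨hs0.trans hu.1.le, hu.2.le⟩, h⟩
    exact absurd (le_csSup hSbdd this) (not_le.mpr hu.1)
  -- y is monotone on [s, t]
  have hmono : MonotoneOn y (Set.Icc s t) := by
    apply monotoneOn_of_deriv_nonneg (convex_Icc s t)
      (hcont.mono (fun x hx => hs0.trans hx.1))
    · intro u hu
      rw [interior_Icc] at hu
      have hu0 : 0 < u := lt_of_le_of_lt hs0 hu.1
      have := (hdiff u hu0.le).hasDerivAt (Ici_mem_nhds hu0)
      exact this.differentiableAt.differentiableWithinAt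
    · intro u hu
      rw [interior_Icc] at hu
      have hu0 : 0 < u := lt_of_le_of_lt hs0 hu.1
      have hd := (hdiff u hu0.le).hasDerivAt (Ici_mem_nhds hu0)
      rw [hd.deriv]
      exact hinv u hu0.le (hylt u hu).le
  have : y s ≤ y t :=
    hmono ⟨le_refl s, hst.le⟩ ⟨hst.le, le_refl t⟩ hst.le
  linarith
end

section
/- Let y : ℝ → ℝ be differentiable on [0, ∞) with y(0) ≥ 0. Suppose that for every t ≥ 0, if y(t) = 0 then y'(t) > 0. Then y(t) ≥ 0 for all t ≥ 0. -/
/-- Scalar Nagumo-type invariance principle: a function `y` differentiable on `[0, ∞)`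
with `y 0 ≥ 0` whose derivative is strictly positive whenever `y` touches zero
stays nonnegative for all `t ≥ 0`. -/
theorem scalar_nagumo_invariance
    (y y' : ℝ → ℝ)
    (hdiff : ∀ t ∈ Set.Ici (0 : ℝ), HasDerivWithinAt y (y' t) (Set.Ici 0) t)
    (h0 : 0 ≤ y 0)
    (hinv : ∀ t, 0 ≤ t → y t = 0 → 0 < y' t) :
    ∀ t, 0 ≤ t → 0 ≤ y t := by
  intro t ht
  by_contra hneg
  push_neg at hneg
  have hcont : ContinuousOn y (Set.Icc 0 t) := fun u hu =>
    ((hdiff u hu.1).continuousWithinAt).mono (fun v hv => hv.1)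
  set S : Set ℝ := {u | u ∈ Set.Icc (0:ℝ) t ∧ 0 ≤ y u} with hSdef
  have hne : S.Nonempty := ⟨0, ⟨le_refl 0, ht⟩, h0⟩
  have hbdd : BddAbove S := ⟨t, fun u hu => hu.1.2⟩
  have hSclosed : IsClosed S := by
    have : S = Set.Icc 0 t ∩ y ⁻¹' Set.Ici 0 := by
      ext u; simp [hSdef, Set.mem_Ici, and_comm]
    rw [this]
    exact hcont.preimage_isClosed_of_isClosed isClosed_Icc isClosed_Ici
  set s := sSup S with hs
  have hsmem : s ∈ S := hSclosed.csSup_mem hne hbdd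
  have hs0 : 0 ≤ s := hsmem.1.1
  have hst : s ≤ t := hsmem.1.2
  have hys : 0 ≤ y s := hsmem.2
  have hslt : s < t := by
    rcases lt_or_eq_of_le hst with h | h
    · exact h
    · exfalso; rw [h] at hys; exact absurd hys (not_le.mpr hneg)
  have hlt : ∀ u, s < u → u ≤ t → y u < 0 := by
    intro u hsu hut
    by_contra h
    push_neg at h
    have : u ∈ S := ⟨⟨hs0.trans hsu.le, hut⟩, h⟩
    exact absurd (le_csSup hbdd this) (not_le.mpr hsu)
  -- the right-neighborhood filter is nontrivial
  have hF : (nhdsWithin s (Set.Ioc s t)).NeBot := by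
    rw [← mem_closure_iff_nhdsWithin_neBot, closure_Ioc hslt.ne]
    exact ⟨le_refl s, hslt.le⟩
  -- y s = 0
  have hys0 : y s = 0 := by
    have hsub : Set.Ioc s t ⊆ Set.Icc 0 t := fun u hu => ⟨hs0.trans hu.1.le, hu.2⟩
    have htend : Filter.Tendsto y (nhdsWithin s (Set.Ioc s t)) (nhds (y s)) :=
      (hcont s ⟨hs0, hst⟩).mono hsub
    have hle : y s ≤ 0 := by
      refine le_of_tendsto htend ?_
      filter_upwards [self_mem_nhdsWithin] with u hu
      exact (hlt u hu.1 hu.2).le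
    exact le_antisymm hle hys
  have hy' : 0 < y' s := hinv s hs0 hys0
  have hslope := hasDerivWithinAt_iff_tendsto_slope.mp (hdiff s hs0)
  have hmono : nhdsWithin s (Set.Ioc s t) ≤ nhdsWithin s (Set.Ici 0 \ {s}) :=
    nhdsWithin_mono s (fun u hu => ⟨hs0.trans hu.1.le, fun h => (ne_of_gt hu.1) (Set.mem_singleton_iff.mp h)⟩)
  have hev : ∀ᶠ u in nhdsWithin s (Set.Ioc s t), 0 < slope y s u :=
    (hslope.mono_left hmono).eventually (eventually_gt_nhds hy')
  obtain ⟨u, hupos, humem⟩ := (hev.and self_mem_nhdsWithin).exists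
  have hyu : y u < 0 := hlt u humem.1 humem.2
  have : slope y s u < 0 := by
    rw [slope_def_field, hys0]
    exact div_neg_of_neg_of_pos (by linarith) (by linarith [humem.1])
  linarith
end

section
/- Let α : ℝ → ℝ be locally Lipschitz, strictly increasing, with α(0) = 0. Let y : ℝ → ℝ be differentiable on [0, ∞) with y(0) ≥ 0, and suppose y'(t) ≥ -α(y(t)) for all t ≥ 0. Then y(t) ≥ 0 for all t ≥ 0. -/
/-- Comparison lemma: if `α` is locally Lipschitz, strictly increasing with `α 0 = 0`,
`y` is differentiable on `[0, ∞)` with `y 0 ≥ 0`, and `y' t ≥ -α (y t)` for all `t ≥ 0`,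
then `y t ≥ 0` for all `t ≥ 0`. -/
theorem scalar_comparison_invariance
    (α : ℝ → ℝ) (hα_lip : LocallyLipschitz α) (hα_mono : StrictMono α) (hα0 : α 0 = 0)
    (y y' : ℝ → ℝ)
    (hdiff : ∀ t ∈ Set.Ici (0 : ℝ), HasDerivWithinAt y (y' t) (Set.Ici 0) t)
    (h0 : 0 ≤ y 0)
    (hineq : ∀ t, 0 ≤ t → -α (y t) ≤ y' t) :
    ∀ t, 0 ≤ t → 0 ≤ y t := by
  intro t₁ ht₁
  by_contra hneg
  push_neg at hneg
  have hcont : ContinuousOn y (Set.Ici 0) := fun t ht => (hdiff t ht).continuousWithinAt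
  have ht₁pos : 0 < t₁ := by
    rcases eq_or_lt_of_le ht₁ with h | h
    · exact absurd hneg (by rw [← h]; linarith)
    · exact h
  set S : Set ℝ := {t | t ∈ Set.Icc 0 t₁ ∧ 0 ≤ y t} with hS
  have hSsub : S ⊆ Set.Icc 0 t₁ := fun t ht => ht.1
  have hSne : S.Nonempty := ⟨0, ⟨le_refl _, le_of_lt ht₁pos⟩, h0⟩
  have hScl : IsClosed S := by
    have h1 : ContinuousOn y (Set.Icc 0 t₁) := hcont.mono (fun x hx => hx.1)
    have h2 : S = Set.Icc 0 t₁ ∩ y ⁻¹' Set.Ici 0 := by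
      ext t; simp [hS, Set.mem_setOf_eq]
    rw [h2]
    exact h1.preimage_isClosed_of_isClosed isClosed_Icc isClosed_Ici
  have hScomp : IsCompact S := (isCompact_Icc).of_isClosed_subset hScl hSsub
  set s := sSup S with hs
  have hsS : s ∈ S := hScomp.sSup_mem hSne
  have hs0 : 0 ≤ s := hsS.1.1
  have hys : 0 ≤ y s := hsS.2
  have hst₁ : s < t₁ := lt_of_le_of_ne hsS.1.2 (by intro h; rw [h] at hys; linarith)
  -- on (s, t₁], y < 0
  have hneg' : ∀ u, s < u → u ≤ t₁ → y u < 0 := by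
    intro u hsu hut₁
    by_contra h'
    push_neg at h'
    have : u ∈ S := ⟨⟨by linarith, hut₁⟩, h'⟩
    exact absurd (le_csSup ⟨t₁, fun x hx => hx.1.2⟩ this) (not_le.mpr hsu)
  -- y strictly mono on [s, t₁]
  have hmono : StrictMonoOn y (Set.Icc s t₁) := by
    apply strictMonoOn_of_deriv_pos (convex_Icc s t₁)
    · exact hcont.mono (fun x hx => le_trans hs0 hx.1)
    · intro x hx
      rw [interior_Icc] at hx
      have hx0 : 0 < x := lt_of_le_of_lt hs0 hx.1
      have hd : HasDerivAt y (y' x) x :=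
        (hdiff x (le_of_lt hx0)).hasDerivAt (Ici_mem_nhds hx0)
      rw [hd.deriv]
      have hyx : y x < 0 := hneg' x hx.1 (le_of_lt hx.2)
      have : α (y x) < 0 := by
        have := hα_mono hyx
        rwa [hα0] at this
      have := hineq x (le_of_lt hx0)
      linarith
  have := hmono ⟨le_refl s, le_of_lt hst₁⟩ ⟨le_of_lt hst₁, le_refl t₁⟩ hst₁
  linarith
end

section
/- Let α : ℝ → ℝ be continuous, strictly increasing, surjective onto ℝ, with α(0) = 0, let ε : ℝ → ℝ be continuous, positive, and monotone nondecreasing, and let p > 0. Then there exists a unique h* ∈ ℝ satisfying α(h*) = -ε(h*) p² / 4, and this h* satisfies h* < 0. -/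
/-- Existence, uniqueness and negativity of the ISSf safety-degradation level `h*`
defined by `α h* = -ε h* * p² / 4`. -/
theorem issf_level_exists_unique_neg
    (α : ℝ → ℝ) (hαc : Continuous α) (hαm : StrictMono α)
    (hαs : Function.Surjective α) (hα0 : α 0 = 0)
    (ε : ℝ → ℝ) (hεc : Continuous ε) (hεpos : ∀ r, 0 < ε r) (hεmono : Monotone ε)
    (p : ℝ) (hp : 0 < p) :
    (∃! hstar : ℝ, α hstar = -(ε hstar * p ^ 2) / 4) ∧
      ∀ hstar : ℝ, α hstar = -(ε hstar * p ^ 2) / 4 → hstar < 0 := by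
  set g : ℝ → ℝ := fun r => α r + ε r * p ^ 2 / 4 with hg
  have hgc : Continuous g := by continuity
  have hgm : StrictMono g := by
    intro a b hab
    have h1 : α a < α b := hαm hab
    have h2 : ε a * p ^ 2 / 4 ≤ ε b * p ^ 2 / 4 := by
      have := hεmono hab.le
      have hp2 : (0:ℝ) < p ^ 2 := by positivity
      nlinarith
    simpa [hg] using add_lt_add_of_lt_of_le h1 h2
  have hg0 : 0 < g 0 := by
    have := hεpos 0
    simp only [hg, hα0, zero_add]
    positivity
  -- equation equiv to g r = 0
  have key : ∀ r, (α r = -(ε r * p ^ 2) / 4) ↔ g r = 0 := by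
    intro r; simp only [hg]; constructor <;> intro h <;> linarith
  obtain ⟨a, ha⟩ := hαs (-(ε 0 * p ^ 2 / 4 + 1))
  have ha0 : a < 0 := by
    have : α a < α 0 := by
      rw [ha, hα0]
      have := hεpos 0
      have hp2 : (0:ℝ) < p ^ 2 := by positivity
      nlinarith
    exact hαm.lt_iff_lt.mp this
  have hga : g a < 0 := by
    have hε : ε a ≤ ε 0 := hεmono ha0.le
    have hp2 : (0:ℝ) < p ^ 2 := by positivity
    simp only [hg, ha]
    nlinarith
  obtain ⟨c, hc, hgc0⟩ := intermediate_value_Icc ha0.le hgc.continuousOn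
      (show (0:ℝ) ∈ Set.Icc (g a) (g 0) from ⟨hga.le, hg0.le⟩)
  have hneg : ∀ hstar : ℝ, α hstar = -(ε hstar * p ^ 2) / 4 → hstar < 0 := by
    intro h hh
    have : g h = 0 := (key h).mp hh
    by_contra hcon
    push_neg at hcon
    rcases eq_or_lt_of_le hcon with h0 | h0
    · rw [← h0] at this; linarith
    · have := hgm h0; linarith
  refine ⟨⟨c, (key c).mpr hgc0, ?_⟩, hneg⟩
  intro y hy
  exact hgm.injective (((key y).mp hy).trans hgc0.symm)
end

section
/- Let α : ℝ → ℝ be continuous, strictly increasing, surjective onto ℝ, with α(0) = 0, let ε : ℝ → ℝ be continuous, positive, and monotone nondecreasing, let p > 0, and let h* be the unique real number satisfying α(h*) = -ε(h*) p² / 4. Then for every r ∈ ℝ: α(r) ≥ -ε(r) p² / 4 if and only if r ≥ h*. -/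
/-- The ISSf set membership condition `α r ≥ -ε r p²/4` holds exactly on the
superlevel set `r ≥ h*`, where `h*` solves `α h* = -ε h* p²/4`. -/
theorem issf_superlevel_characterization
    (α : ℝ → ℝ) (hαc : Continuous α) (hαm : StrictMono α)
    (hαs : Function.Surjective α) (hα0 : α 0 = 0)
    (ε : ℝ → ℝ) (hεc : Continuous ε) (hεpos : ∀ r, 0 < ε r) (hεmono : Monotone ε)
    (p : ℝ) (hp : 0 < p)
    (hstar : ℝ) (hstar_eq : α hstar = -(ε hstar * p ^ 2) / 4) :
    ∀ r : ℝ, -(ε r * p ^ 2) / 4 ≤ α r ↔ hstar ≤ r := by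
  have hmono : Monotone (fun r => ε r * p ^ 2 / 4) := by
    intro a b hab
    have := hεmono hab
    have hpp : (0:ℝ) ≤ p ^ 2 / 4 := by positivity
    simp only [mul_div_assoc]
    exact mul_le_mul_of_nonneg_right this hpp
  have hf : StrictMono (fun r => α r + ε r * p ^ 2 / 4) := hαm.add_monotone hmono
  have hf0 : α hstar + ε hstar * p ^ 2 / 4 = 0 := by rw [hstar_eq]; ring
  intro r
  constructor
  · intro h
    have : α hstar + ε hstar * p ^ 2 / 4 ≤ α r + ε r * p ^ 2 / 4 := by
      rw [hf0]; linarith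
    exact hf.le_iff_le.mp this
  · intro h
    have := hf.le_iff_le.mpr h
    simp only [hf0] at this
    linarith
end

section
/- Corollary 2 (inclusion part). Let α : ℝ → ℝ be continuous, strictly increasing, surjective onto ℝ, with α(0) = 0, let ε : ℝ → ℝ be continuous, positive, and monotone nondecreasing, and let p > 0. Let h*_ISSf be the unique real number satisfying α(h*_ISSf) = -ε(h*_ISSf) p²/4. Suppose h̃ ∈ ℝ and δ ≥ 0 satisfy α(h̃) = δ²/ε(h̃) - δ·p and ε(h̃) ≤ 2δ/p. Then h̃ ≥ h*_ISSf; consequently, for any h : E → ℝ the superlevel set {x | h(x) ≥ h̃} is contained in {x | h(x) ≥ h*_ISSf}. -/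
/-- Corollary 2 (inclusion part): the refined PBF level `h̃`, defined by
`α h̃ = δ²/ε(h̃) - δ p` with `ε(h̃) ≤ 2δ/p`, satisfies `h̃ ≥ h*_ISSf`, where
`h*_ISSf` solves `α h*_ISSf = -ε(h*_ISSf) p²/4`; hence the superlevel set
`{x | h x ≥ h̃}` is contained in the ISSf safe set `{x | h x ≥ h*_ISSf}`. -/
theorem pbf_corollary_issf_inclusion
    (α : ℝ → ℝ) (hαc : Continuous α) (hαm : StrictMono α)
    (hαs : Function.Surjective α) (hα0 : α 0 = 0)
    (ε : ℝ → ℝ) (hεc : Continuous ε) (hεpos : ∀ r, 0 < ε r) (hεmono : Monotone ε)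
    (p : ℝ) (hp : 0 < p)
    (hISSf : ℝ) (hISSf_eq : α hISSf = -(ε hISSf * p ^ 2) / 4)
    (htil : ℝ) (δ : ℝ) (hδ : 0 ≤ δ)
    (htil_eq : α htil = δ ^ 2 / ε htil - δ * p)
    (hεδ : ε htil ≤ 2 * δ / p) :
    hISSf ≤ htil ∧
      ∀ (E : Type) (h : E → ℝ),
        {x : E | htil ≤ h x} ⊆ {x : E | hISSf ≤ h x} := by
  have key : hISSf ≤ htil := by
    by_contra hlt
    push_neg at hlt
    have hαlt : α htil < α hISSf := hαm hlt
    have hεle : ε htil ≤ ε hISSf := hεmono hlt.le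
    have e_pos : 0 < ε htil := hεpos htil
    have hsq : 0 ≤ (δ - ε htil * p / 2) ^ 2 / ε htil := by positivity
    have heq : α htil + ε htil * p ^ 2 / 4 = (δ - ε htil * p / 2) ^ 2 / ε htil := by
      rw [htil_eq]; field_simp; ring
    have h1 : 0 ≤ α htil + ε htil * p ^ 2 / 4 := heq ▸ hsq
    have h2 : α hISSf + ε hISSf * p ^ 2 / 4 = 0 := by rw [hISSf_eq]; ring
    nlinarith [sq_nonneg p, mul_le_mul_of_nonneg_right hεle (by positivity : (0:ℝ) ≤ p ^ 2)]
  exact ⟨key, fun E h x hx => le_trans key hx⟩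
end
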